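/- Let A be a positive definite real m × m matrix, U a real N × m matrix, D an invertible diagonal real N × N matrix, and v ∈ ℝ^N. Set Σ_data = D U A Uᵀ D + D·D and V = Uᵀ D^{-1} v. Then the quadratic form satisfies vᵀ Σ_data^{-1} v = ‖D^{-1} v‖² − Vᵀ (A^{-1} + UᵀU)^{-1} V, where ‖·‖ denotes the Euclidean norm on ℝ^N. -/
import Mathlib


open Matrix

/-- Quadratic form identity: with `A` positive definite, `U` an `N × m` matrix,
`D = diagonal d` invertible diagonal, `v ∈ ℝ^N`, `Σ_data = D U A Uᵀ D + D·D` and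
`V = Uᵀ D⁻¹ v`, we have `vᵀ Σ_data⁻¹ v = ‖D⁻¹ v‖² − Vᵀ (A⁻¹ + UᵀU)⁻¹ V`,
with the Euclidean norm on `ℝ^N`. -/
theorem quadratic_form_identity (m N : ℕ)
    (A : Matrix (Fin m) (Fin m) ℝ) (hA : A.PosDef)
    (U : Matrix (Fin N) (Fin m) ℝ)
    (d : Fin N → ℝ) (hd : ∀ i, d i ≠ 0)
    (v : Fin N → ℝ) :
    v ⬝ᵥ ((Matrix.diagonal d * U * A * Uᵀ * Matrix.diagonal d
        + Matrix.diagonal d * Matrix.diagonal d)⁻¹ *ᵥ v)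
      = ‖(EuclideanSpace.equiv (Fin N) ℝ).symm ((Matrix.diagonal d)⁻¹ *ᵥ v)‖ ^ 2
        - (Uᵀ *ᵥ ((Matrix.diagonal d)⁻¹ *ᵥ v)) ⬝ᵥ
            ((A⁻¹ + Uᵀ * U)⁻¹ *ᵥ (Uᵀ *ᵥ ((Matrix.diagonal d)⁻¹ *ᵥ v))) := by
  set D : Matrix (Fin N) (Fin N) ℝ := Matrix.diagonal d with hD
  set w : Fin N → ℝ := D⁻¹ *ᵥ v with hw
  set K : Matrix (Fin m) (Fin m) ℝ := A⁻¹ + Uᵀ * U with hK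
  -- K is positive definite, hence a unit
  have hUU : (Uᵀ * U).PosSemidef := by
    simpa using Matrix.posSemidef_conjTranspose_mul_self U
  have hKpd : K.PosDef := hA.inv.add_posSemidef hUU
  -- factor Σ = D * (1 + U A Uᵀ) * D
  have hfac : D * U * A * Uᵀ * D + D * D = D * (1 + U * A * Uᵀ) * D := by
    rw [Matrix.mul_add, Matrix.mul_one, Matrix.add_mul, add_comm]
    simp [Matrix.mul_assoc]
  -- Woodbury
  have hwood : (1 + U * A * Uᵀ)⁻¹ = 1 - U * K⁻¹ * Uᵀ := by
    have := Matrix.add_mul_mul_inv_eq_sub (1 : Matrix (Fin N) (Fin N) ℝ) U A Uᵀ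
      isUnit_one hA.isUnit (by simpa [hK] using hKpd.isUnit)
    simpa [hK] using this
  -- D⁻¹ is symmetric
  have hDsymm : D⁻¹ᵀ = D⁻¹ := by
    rw [Matrix.transpose_nonsing_inv, hD, Matrix.diagonal_transpose]
  have hinv : (D * U * A * Uᵀ * D + D * D)⁻¹ = D⁻¹ * (1 - U * K⁻¹ * Uᵀ) * D⁻¹ := by
    rw [hfac, Matrix.mul_inv_rev, Matrix.mul_inv_rev, hwood, Matrix.mul_assoc, Matrix.mul_assoc]
  rw [hinv]
  -- pull out the D⁻¹'s
  have hpull : v ⬝ᵥ ((D⁻¹ * (1 - U * K⁻¹ * Uᵀ) * D⁻¹) *ᵥ v)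
      = w ⬝ᵥ ((1 - U * K⁻¹ * Uᵀ) *ᵥ w) := by
    rw [← Matrix.mulVec_mulVec, ← Matrix.mulVec_mulVec, Matrix.dotProduct_mulVec v D⁻¹,
      ← Matrix.mulVec_transpose, hDsymm, ← hw, Matrix.dotProduct_mulVec]
  rw [hpull, Matrix.sub_mulVec, dotProduct_sub, Matrix.one_mulVec]
  congr 1
  · -- ‖w‖² = w ⬝ᵥ w
    rw [EuclideanSpace.norm_eq]
    rw [Real.sq_sqrt (by positivity)]
    simp [dotProduct, sq]
  · rw [← Matrix.mulVec_mulVec, ← Matrix.mulVec_mulVec, Matrix.dotProduct_mulVec w U,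
      ← Matrix.mulVec_transpose, Matrix.dotProduct_mulVec]
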